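/- The only positive integer solutions (k, n) of the equation F_1 + 2F_2 + 3F_3 + ... + kF_k = F_n^2 are (1,1), (1,2), and (3,4). -/

import Mathlib

/-!
Work in `ℝ` modulo `φ²ℤ`. Since `F (n + 2) = φ² F n + ψ ^ n`, the closed form
`k F (k + 2) - F (k + 3) + 2` of the sum is congruent to `2 + ψ ^ k (k - ψ)`, which lies within
`ψ² = 2 - φ` of `2` once `k ≥ 6`. On the other hand `F (n + 2) ^ 2 = F n ^ 2 + F (2n + 2)` is
congruent to `F n ^ 2 + ψ ^ (2n)`, so the residue of `F (n + 1) ^ 2` is `1` plus a sum of distinct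
terms of `ψ² + ψ⁴ + ⋯ = φ - 1`, and lies in `[1, φ)`. These two representatives differ by a nonzero
amount less than `φ²`, so they are not congruent and no sum with `k ≥ 6` is a Fibonacci square;
the sums with `k ≤ 5` are checked directly.
-/

open Finset Real
open scoped goldenRatio

theorem sum_Icc_mul_fib_add_fib (k : ℕ) :
    ∑ j ∈ Icc 1 k, j * Nat.fib j + Nat.fib (k + 3) = k * Nat.fib (k + 2) + 2 := by
  induction k with
  | zero => rfl
  | succ k ih =>
    have h₃ : Nat.fib (k + 3) = Nat.fib (k + 1) + Nat.fib (k + 2) := Nat.fib_add_two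
    have h₄ : Nat.fib (k + 4) = Nat.fib (k + 2) + Nat.fib (k + 3) := Nat.fib_add_two
    rw [sum_Icc_succ_top (by omega), show k + 1 + 3 = k + 4 by ring,
      show k + 1 + 2 = k + 3 by ring]
    linarith [congrArg ((k + 1) * ·) h₃]

theorem fib_add_two_sq (n : ℕ) : Nat.fib (n + 2) ^ 2 = Nat.fib n ^ 2 + Nat.fib (2 * n + 2) := by
  have h₁ : Nat.fib (2 * n + 1) = Nat.fib (n + 1) ^ 2 + Nat.fib n ^ 2 := Nat.fib_two_mul_add_one n
  have h₂ : Nat.fib (2 * n + 3) = Nat.fib (n + 2) ^ 2 + Nat.fib (n + 1) ^ 2 :=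
    Nat.fib_two_mul_add_one (n + 1)
  have h₃ : Nat.fib (2 * n + 3) = Nat.fib (2 * n + 1) + Nat.fib (2 * n + 2) := Nat.fib_add_two
  omega

theorem fib_add_two_sub_goldenRatio_sq_mul_fib (n : ℕ) :
    Nat.fib (n + 2) - φ ^ 2 * Nat.fib n = ψ ^ n := by
  have h₁ := fib_succ_sub_goldenRatio_mul_fib n
  have h₂ := fib_succ_sub_goldenRatio_mul_fib (n + 1)
  linear_combination h₂ + φ * h₁ + ψ ^ n * goldenRatio_add_goldenConj

theorem fib_add_two_sq_modEq (n : ℕ) :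
    (Nat.fib (n + 2) ^ 2 : ℝ) ≡ Nat.fib n ^ 2 + ψ ^ (2 * n) [PMOD φ ^ 2] := by
  refine AddCommGroup.modEq_iff_zsmul'.2 ⟨-Nat.fib (2 * n), ?_⟩
  have h := fib_add_two_sub_goldenRatio_sq_mul_fib (2 * n)
  have hsq : ((Nat.fib (n + 2) ^ 2 : ℕ) : ℝ) = (Nat.fib n ^ 2 + Nat.fib (2 * n + 2) : ℕ) :=
    congrArg _ (fib_add_two_sq n)
  push_cast at hsq ⊢
  linear_combination -hsq - h

-- `φ + ψ ^ (2n + 1) = 1 + ψ² + ψ⁴ + ⋯ + ψ ^ (2n)`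
theorem exists_fib_succ_sq_modEq (n : ℕ) :
    ∃ r, (Nat.fib (n + 1) ^ 2 : ℝ) ≡ r [PMOD φ ^ 2] ∧ 1 ≤ r ∧ r ≤ φ + ψ ^ (2 * n + 1) := by
  induction n using Nat.twoStepInduction with
  | zero => exact ⟨1, by simp, le_rfl, by simp [goldenRatio_add_goldenConj]⟩
  | one =>
    have hψ : ψ ^ 3 = 2 * ψ + 1 := by linear_combination (ψ + 1) * goldenConj_sq
    refine ⟨1, by simp, le_rfl, show 1 ≤ φ + ψ ^ 3 from ?_⟩
    linarith [goldenRatio_add_goldenConj, neg_one_lt_goldenConj]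
  | more n ih _ =>
    obtain ⟨r, hr, hr₁, hrφ⟩ := ih
    refine ⟨r + ψ ^ (2 * (n + 1)), (fib_add_two_sq_modEq (n + 1)).trans (hr.add_right _), ?_, ?_⟩
    · linarith [(even_two_mul (n + 1)).pow_nonneg ψ]
    · have hψ : ψ ^ (2 * (n + 2) + 1) =
          ψ ^ (2 * n + 1) + ψ ^ (2 * (n + 1)) + ψ ^ (2 * (n + 2)) := by
        linear_combination ψ ^ (2 * n + 1) * (ψ ^ 2 + 1) * goldenConj_sq
      linarith [(even_two_mul (n + 2)).pow_nonneg ψ]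

theorem sum_Icc_mul_fib_modEq (k : ℕ) :
    ∑ j ∈ Icc 1 k, (j : ℝ) * Nat.fib j ≡ 2 + ψ ^ k * (k - ψ) [PMOD φ ^ 2] := by
  refine AddCommGroup.modEq_iff_zsmul'.2 ⟨Nat.fib (k + 1) - k * Nat.fib k, ?_⟩
  have hsum : ((∑ j ∈ Icc 1 k, j * Nat.fib j + Nat.fib (k + 3) : ℕ) : ℝ) =
      (k * Nat.fib (k + 2) + 2 : ℕ) :=
    congrArg _ (sum_Icc_mul_fib_add_fib k)
  have h₂ := fib_add_two_sub_goldenRatio_sq_mul_fib k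
  have h₃ : (Nat.fib (k + 3) : ℝ) - φ ^ 2 * Nat.fib (k + 1) = ψ ^ (k + 1) :=
    fib_add_two_sub_goldenRatio_sq_mul_fib (k + 1)
  push_cast [zsmul_eq_mul] at hsum ⊢
  linear_combination -hsum - k * h₂ + h₃

theorem goldenRatio_sq_mul_sub_goldenConj_lt_pow {k : ℕ} (hk : 6 ≤ k) :
    φ ^ 2 * (k - ψ) < φ ^ k := by
  induction k, hk using Nat.le_induction with
  | base =>
    have h₆ : φ ^ 6 = 8 * φ + 5 := by
      linear_combination (φ ^ 4 + φ ^ 3 + 2 * φ ^ 2 + 3 * φ + 5) * goldenRatio_sq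
    have h₃ : φ ^ 3 = 2 * φ + 1 := by linear_combination (φ + 1) * goldenRatio_sq
    rw [h₆, ← one_sub_goldenConj]
    push_cast
    linear_combination one_lt_goldenRatio + 5 * goldenRatio_sq + h₃
  | succ k hk ih =>
    have hφ₃ : φ ^ 3 * (φ - 1) ≤ φ ^ k * (φ - 1) :=
      mul_le_mul_of_nonneg_right (pow_le_pow_right₀ one_lt_goldenRatio.le (by omega))
        (sub_nonneg.2 one_lt_goldenRatio.le)
    have h₄ : φ ^ 3 * (φ - 1) = φ ^ 2 := by linear_combination φ ^ 2 * goldenRatio_sq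
    rw [pow_succ φ k]
    push_cast
    linarith

theorem abs_goldenConj_pow_mul_sub_goldenConj_lt {k : ℕ} (hk : 6 ≤ k) :
    |ψ ^ k * (k - ψ)| < ψ ^ 2 := by
  have hψφ : |ψ| * φ = 1 := by
    rw [abs_of_neg goldenConj_neg]
    linear_combination -goldenConj_mul_goldenRatio
  have hkψ : 0 < (k : ℝ) - ψ := by linarith [goldenConj_neg, (k.cast_nonneg : (0 : ℝ) ≤ k)]
  rw [abs_mul, abs_pow, abs_of_pos hkψ, ← sq_abs]
  calc |ψ| ^ k * (k - ψ) = |ψ| ^ (k + 2) * (φ ^ 2 * (k - ψ)) := by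
        linear_combination (-(|ψ| ^ k * (k - ψ) * (1 + |ψ| * φ))) * hψφ
    _ < |ψ| ^ (k + 2) * φ ^ k :=
        mul_lt_mul_of_pos_left (goldenRatio_sq_mul_sub_goldenConj_lt_pow hk)
          (pow_pos (abs_pos.2 goldenConj_ne_zero) _)
    _ = |ψ| ^ 2 := by rw [pow_add, mul_right_comm, ← mul_pow, hψφ, one_pow, one_mul]

theorem sum_Icc_mul_fib_ne_fib_sq {k : ℕ} (hk : 6 ≤ k) (n : ℕ) :
    ∑ j ∈ Icc 1 k, j * Nat.fib j ≠ Nat.fib (n + 1) ^ 2 := by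
  intro h
  obtain ⟨r, hr, hr₁, hrφ⟩ := exists_fib_succ_sq_modEq n
  have hcast : ∑ j ∈ Icc 1 k, (j : ℝ) * Nat.fib j = (Nat.fib (n + 1) : ℝ) ^ 2 := by
    exact_mod_cast h
  have hmod : r ≡ 2 + ψ ^ k * (k - ψ) [PMOD φ ^ 2] :=
    hr.symm.trans (hcast ▸ sum_Icc_mul_fib_modEq k)
  have hε := abs_lt.1 (abs_goldenConj_pow_mul_sub_goldenConj_lt hk)
  have hψ : ψ ^ (2 * n + 1) < 0 := (odd_two_mul_add_one n).pow_neg goldenConj_neg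
  -- `r < φ < 2 + ψ ^ k * (k - ψ) < 4 - φ < r + φ ^ 2`
  refine (AddCommGroup.modEq_iff_forall_notMem_Ioo_mod (by positivity)).1 hmod 0 ?_
  rw [zero_smul, sub_zero]
  constructor <;>
    linarith [goldenConj_sq, goldenRatio_sq, goldenRatio_add_goldenConj, one_lt_goldenRatio]

theorem sum_j_fib_eq_fib_sq_general (k n : ℕ) (hn : 0 < n) :
    (∑ j ∈ Finset.Icc 1 k, j * Nat.fib j) = Nat.fib n ^ 2 ↔
      (k, n) = (1, 1) ∨ (k, n) = (1, 2) ∨ (k, n) = (3, 4) := by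
  refine ⟨fun h => ?_, by rintro (h | h | h) <;> cases h <;> decide⟩
  obtain hk | hk := le_or_gt k 5
  · have hsum : ∑ j ∈ Icc 1 k, j * Nat.fib j ≤ 46 :=
      (sum_le_sum_of_subset (Icc_subset_Icc_right hk)).trans (by decide)
    have hn₅ : n ≤ 5 := by
      by_contra! hn₆
      have : 8 ≤ Nat.fib n := Nat.fib_mono hn₆
      nlinarith
    interval_cases k <;> interval_cases n <;> revert h <;> decide
  · obtain ⟨n, rfl⟩ := Nat.exists_eq_add_one_of_ne_zero hn.ne'
    exact absurd h (sum_Icc_mul_fib_ne_fib_sq hk n)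

theorem sum_j_fib_eq_fib_sq (k n : ℕ) (hk : 0 < k) (hn : 0 < n) :
    (∑ j ∈ Finset.Icc 1 k, j * Nat.fib j) = Nat.fib n ^ 2 ↔
      (k, n) = (1, 1) ∨ (k, n) = (1, 2) ∨ (k, n) = (3, 4) :=
  sum_j_fib_eq_fib_sq_general k n hn
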